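/- arXiv:2504.18036 — 3 statements merged into one kernel-verified Lean document; each statement's English description precedes it below -/
import Mathlib

section
/- For every real number x, the Fourier series of the 2π-periodic function θ ↦ exp(i x sin θ) is given exactly by the Bessel coefficients: exp(i x sin θ) = ∑_{n ∈ ℤ} J_n(x) e^{i n θ}, where the series converges absolutely, and uniformly in θ ∈ ℝ. -/
open MeasureTheory Filter

/-- Bessel function of the first kind of integer order `n`, via the integral
representation `J_n(x) = (1/(2π)) ∫_0^{2π} exp(i (x sin θ - n θ)) dθ`. -/
noncomputable def besselJ (n : ℤ) (x : ℝ) : ℂ :=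
  (1 / (2 * Real.pi)) * ∫ θ in (0:ℝ)..(2 * Real.pi),
    Complex.exp (Complex.I * ((x : ℂ) * (Real.sin θ : ℂ) - (n : ℂ) * (θ : ℂ)))

/-! The function `θ ↦ exp (i x sin θ)` is smooth and `2π`-periodic, and its Fourier coefficients
are the `J_n(x)`. Integrating by parts twice, the Fourier coefficients of a periodic `C²` function
are `O(n⁻²)`, hence absolutely summable; and a continuous function on the circle with summable
Fourier coefficients is the uniform sum of its Fourier series. -/

open Complex Set
open scoped Real Interval

section FourierCoeffOn

variable {a b : ℝ} (hab : a < b)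

theorem fourierCoeffOn_of_hasDerivAt_of_eq {f f' : ℝ → ℂ} {n : ℤ} (hn : n ≠ 0)
    (hf : ∀ x ∈ [[a, b]], HasDerivAt f (f' x) x) (hf' : IntervalIntegrable f' volume a b)
    (hfab : f b = f a) :
    fourierCoeffOn hab f n = (b - a) / (2 * π * I * n) * fourierCoeffOn hab f' n := by
  rw [fourierCoeffOn_of_hasDerivAt hab hn hf hf', hfab, sub_self, mul_zero, zero_sub]
  have : (n : ℂ) ≠ 0 := Int.cast_ne_zero.mpr hn
  field_simp

theorem norm_fourierCoeffOn_le {E : Type*} [NormedAddCommGroup E] [NormedSpace ℂ E]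
    {f : ℝ → E} {C : ℝ} (hC : ∀ x ∈ Ioc a b, ‖f x‖ ≤ C) (n : ℤ) :
    ‖fourierCoeffOn hab f n‖ ≤ C := by
  have hba : 0 < b - a := sub_pos.mpr hab
  have hint : ‖∫ x in a..b, fourier (-n) (x : AddCircle (b - a)) • f x‖ ≤ C * (b - a) := by
    rw [← abs_of_pos hba]
    refine intervalIntegral.norm_integral_le_of_norm_le_const fun x hx => ?_
    rw [norm_smul, fourier_apply, Circle.norm_coe, one_mul]
    exact hC x (uIoc_of_le hab.le ▸ hx)
  rw [fourierCoeffOn_eq_integral, norm_smul, Real.norm_of_nonneg (by positivity)]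
  calc 1 / (b - a) * ‖∫ x in a..b, fourier (-n) (x : AddCircle (b - a)) • f x‖
      ≤ 1 / (b - a) * (C * (b - a)) := by gcongr
    _ = C := by field_simp

theorem norm_fourierCoeffOn_le_of_hasDerivAt_of_hasDerivAt {f f' f'' : ℝ → ℂ} {C : ℝ} {n : ℤ}
    (hn : n ≠ 0) (hf : ∀ x ∈ [[a, b]], HasDerivAt f (f' x) x)
    (hf' : ∀ x ∈ [[a, b]], HasDerivAt f' (f'' x) x) (hf'' : IntervalIntegrable f'' volume a b)
    (hfab : f b = f a) (hf'ab : f' b = f' a) (hC : ∀ x ∈ Ioc a b, ‖f'' x‖ ≤ C) :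
    ‖fourierCoeffOn hab f n‖ ≤ ((b - a) / (2 * π)) ^ 2 * C / n ^ 2 := by
  have hf'_int : IntervalIntegrable f' volume a b :=
    ContinuousOn.intervalIntegrable fun x hx => (hf' x hx).continuousAt.continuousWithinAt
  have hnorm : ‖(b - a : ℂ) / (2 * π * I * n)‖ = (b - a) / (2 * π) / |(n : ℝ)| := by
    rw [norm_div, ← ofReal_sub, norm_real, Real.norm_of_nonneg (sub_pos.mpr hab).le]
    simp [abs_of_pos Real.pi_pos, div_div]
  rw [fourierCoeffOn_of_hasDerivAt_of_eq hab hn hf hf'_int hfab,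
    fourierCoeffOn_of_hasDerivAt_of_eq hab hn hf' hf'' hf'ab, ← mul_assoc, norm_mul, norm_mul,
    hnorm, ← sq, div_pow, sq_abs, div_mul_eq_mul_div]
  gcongr
  exact norm_fourierCoeffOn_le hab hC n

theorem summable_norm_fourierCoeffOn_of_hasDerivAt_of_hasDerivAt {f f' f'' : ℝ → ℂ} {C : ℝ}
    (hf : ∀ x ∈ [[a, b]], HasDerivAt f (f' x) x)
    (hf' : ∀ x ∈ [[a, b]], HasDerivAt f' (f'' x) x) (hf'' : IntervalIntegrable f'' volume a b)
    (hfab : f b = f a) (hf'ab : f' b = f' a) (hC : ∀ x ∈ Ioc a b, ‖f'' x‖ ≤ C) :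
    Summable fun n => ‖fourierCoeffOn hab f n‖ := by
  refine .of_norm_bounded_eventually
    ((Real.summable_one_div_int_pow.mpr one_lt_two).mul_left (((b - a) / (2 * π)) ^ 2 * C)) ?_
  filter_upwards [eventually_cofinite_ne 0] with n hn
  rw [norm_norm, mul_one_div]
  exact norm_fourierCoeffOn_le_of_hasDerivAt_of_hasDerivAt hab hn hf hf' hf'' hfab hf'ab hC

theorem Function.Periodic.tendstoUniformly_fourier_series_of_summable {f : ℝ → ℂ}
    (hper : Function.Periodic f (b - a)) (hc : Continuous f)
    (hsum : Summable (fourierCoeffOn hab f)) :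
    TendstoUniformly
      (fun (s : Finset ℤ) (x : ℝ) =>
        ∑ n ∈ s, fourierCoeffOn hab f n * fourier n (x : AddCircle (b - a)))
      f atTop := by
  have : Fact (0 < b - a) := ⟨sub_pos.mpr hab⟩
  let F : C(AddCircle (b - a), ℂ) := ⟨hper.lift, hc.quotient_liftOn' _⟩
  have hF_coe (x : ℝ) : F x = f x := hper.lift_coe x
  have hcoeff : fourierCoeff F = fourierCoeffOn hab f := by
    ext n
    rw [fourierCoeff_eq_intervalIntegral _ n a, fourierCoeffOn_eq_integral, add_sub_cancel]
    simp only [hF_coe]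
  have hF : Tendsto (fun s => ∑ n ∈ s, fourierCoeff F n • fourier n) atTop (nhds F) :=
    hasSum_fourier_series_of_summable (hcoeff ▸ hsum)
  have := (ContinuousMap.tendsto_iff_tendstoUniformly.mp hF).comp ((↑) : ℝ → AddCircle (b - a))
  simpa [Function.comp_def, hcoeff, hF_coe] using this

end FourierCoeffOn

section ExpISin
variable (x : ℝ)

theorem hasDerivAt_exp_I_mul_sin (θ : ℝ) :
    HasDerivAt (fun θ : ℝ => exp (I * x * Real.sin θ))
      (I * x * Real.cos θ * exp (I * x * Real.sin θ)) θ := by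
  convert ((Real.hasDerivAt_sin θ).ofReal_comp.const_mul (I * x)).cexp using 1
  ring

theorem hasDerivAt_I_mul_cos_mul_exp_I_mul_sin (θ : ℝ) :
    HasDerivAt (fun θ : ℝ => I * x * Real.cos θ * exp (I * x * Real.sin θ))
      ((-(I * x * Real.sin θ) - x ^ 2 * Real.cos θ ^ 2) * exp (I * x * Real.sin θ)) θ := by
  refine (((Real.hasDerivAt_cos θ).ofReal_comp.const_mul (I * x)).mul
    (hasDerivAt_exp_I_mul_sin x θ)).congr_deriv ?_
  rw [ofReal_neg]
  linear_combination (x ^ 2 * Real.cos θ ^ 2 * exp (I * x * Real.sin θ)) * I_sq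

theorem norm_exp_I_mul_sin (θ : ℝ) : ‖exp (I * x * Real.sin θ)‖ = 1 := by
  rw [mul_comm I, mul_right_comm, ← ofReal_mul, norm_exp_ofReal_mul_I]

theorem norm_second_deriv_exp_I_mul_sin_le (θ : ℝ) :
    ‖(-(I * x * Real.sin θ) - x ^ 2 * Real.cos θ ^ 2) * exp (I * x * Real.sin θ)‖ ≤
      |x| + x ^ 2 := by
  have hsin : |Real.sin θ| ≤ 1 := Real.abs_sin_le_one θ
  have hcos : Real.cos θ ^ 2 ≤ 1 := Real.cos_sq_le_one θ
  rw [norm_mul, norm_exp_I_mul_sin, mul_one]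
  calc ‖-(I * x * Real.sin θ) - x ^ 2 * Real.cos θ ^ 2‖
      ≤ ‖I * x * Real.sin θ‖ + ‖(x ^ 2 * Real.cos θ ^ 2 : ℂ)‖ :=
        norm_sub_le_of_le (norm_neg _).le le_rfl
    _ = |x| * |Real.sin θ| + x ^ 2 * Real.cos θ ^ 2 := by
      rw [← ofReal_pow, ← ofReal_pow, ← ofReal_mul, norm_real, norm_mul, norm_mul, norm_I, one_mul,
        norm_real, norm_real, Real.norm_eq_abs, Real.norm_eq_abs, Real.norm_of_nonneg (by positivity)]
    _ ≤ |x| + x ^ 2 := by gcongr <;> nlinarith [abs_nonneg x, sq_nonneg x]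

theorem besselJ_eq_fourierCoeffOn (n : ℤ) :
    besselJ n x = fourierCoeffOn Real.two_pi_pos (fun θ : ℝ => exp (I * x * Real.sin θ)) n := by
  rw [fourierCoeffOn_eq_integral, besselJ, real_smul, sub_zero]
  push_cast
  congr 1
  refine intervalIntegral.integral_congr fun θ _ => ?_
  rw [fourier_coe_apply, smul_eq_mul, ← exp_add]
  congr 1
  push_cast
  field_simp
  ring

end ExpISin

theorem summable_norm_besselJ (x : ℝ) : Summable fun n : ℤ => ‖besselJ n x‖ := by
  simp_rw [besselJ_eq_fourierCoeffOn]
  refine summable_norm_fourierCoeffOn_of_hasDerivAt_of_hasDerivAt Real.two_pi_pos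
    (fun θ _ => hasDerivAt_exp_I_mul_sin x θ)
    (fun θ _ => hasDerivAt_I_mul_cos_mul_exp_I_mul_sin x θ) (Continuous.intervalIntegrable
      (by fun_prop) _ _) (by simp) (by simp) (fun θ _ => norm_second_deriv_exp_I_mul_sin_le x θ)

/-- For every real `x`, the Fourier series of `θ ↦ exp(i x sin θ)` is given exactly by the
Bessel coefficients: `exp(i x sin θ) = ∑_{n ∈ ℤ} J_n(x) e^{i n θ}`, the series converging
absolutely, and uniformly in `θ ∈ ℝ`. -/
theorem fourier_series_exp_sin (x : ℝ) :
    Summable (fun n : ℤ => ‖besselJ n x‖) ∧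
    (∀ θ : ℝ,
      HasSum (fun n : ℤ => besselJ n x * Complex.exp (Complex.I * (n : ℂ) * (θ : ℂ)))
        (Complex.exp (Complex.I * (x : ℂ) * (Real.sin θ : ℂ)))) ∧
    TendstoUniformly
      (fun (s : Finset ℤ) (θ : ℝ) =>
        ∑ n ∈ s, besselJ n x * Complex.exp (Complex.I * (n : ℂ) * (θ : ℂ)))
      (fun θ : ℝ => Complex.exp (Complex.I * (x : ℂ) * (Real.sin θ : ℂ)))
      atTop := by
  -- `fourierCoeffOn` on `[0, 2π]` works on `AddCircle (2 * π - 0)`.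
  have hper : Function.Periodic (fun θ : ℝ => exp (I * x * Real.sin θ)) (2 * π - 0) := by
    simp [Real.sin_add_two_pi]
  have hterm (n : ℤ) (θ : ℝ) :
      fourierCoeffOn Real.two_pi_pos (fun θ : ℝ => exp (I * x * Real.sin θ)) n *
        fourier n (θ : AddCircle (2 * π - 0)) = besselJ n x * exp (I * n * θ) := by
    rw [besselJ_eq_fourierCoeffOn, fourier_coe_apply]
    congr 2
    field_simp
    push_cast
    ring
  have hunif := hper.tendstoUniformly_fourier_series_of_summable Real.two_pi_pos (by fun_prop)
    (by simpa only [besselJ_eq_fourierCoeffOn] using (summable_norm_besselJ x).of_norm)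
  simp_rw [hterm] at hunif
  exact ⟨summable_norm_besselJ x, fun θ => hunif.tendsto_at θ, hunif⟩
end

section
/- (Continuous-aperture form of the Λ-term in Theorem 4.1.) Let x, φ be real numbers and let 0 < α < π. Then (1/(2π)) ∫_0^{2π} exp(i x cos(ϑ − φ)) · [ (1/(2(π − α))) ∫_{ϑ+α}^{ϑ+2π−α} exp(i x cos(θ − φ)) dθ ] dϑ = J_0(x)² + 2 ∑_{p=1}^∞ J_p(x)² sinc(p(π − α)), where the series converges absolutely. -/
/-!
On the circle `ℝ / 2πℤ` put `f ϑ = exp (i x cos (ϑ - φ))`. It is a translate of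
`θ ↦ exp (i x sin θ)`, whose Fourier coefficients are the `J_n(x)` by definition, so
`f̂ n = e^{i n (π/2 - φ)} J_n(x)` and `f̂ (-n) f̂ n = (-1)^n J_n(x)²`. The inner aperture integral
`g` is a moving average of `f`, so translation invariance of the Haar measure gives
`ĝ n = (-1)^n sinc (n (π - α)) f̂ n`. The left-hand side is `∫ f g` over the circle, which by
Parseval's identity (in its bilinear form, without conjugation) is
`∑ₙ f̂ (-n) ĝ n = ∑ₙ J_n(x)² sinc (n (π - α))`. The summands are even in `n` because
`J_{-n} = (-1)^n J_n`, and folding the sum over `ℤ` onto `ℕ` gives the claim.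
-/

open MeasureTheory Filter

noncomputable def rsinc (t : ℝ) : ℝ := if t = 0 then 1 else Real.sin t / t

open AddCircle ComplexConjugate

section FourierCoeff

variable {T : ℝ}

theorem fourier_sub_apply (n : ℤ) (t s : AddCircle T) :
    fourier n (t - s) = fourier (-n) s * fourier n t := by
  rw [sub_eq_add_neg, fourier_apply, smul_add, toCircle_add]
  simp [mul_comm]

variable [Fact (0 < T)]

theorem fourierCoeff_conj (F : AddCircle T → ℂ) (n : ℤ) :
    fourierCoeff (fun t => conj (F t)) n = conj (fourierCoeff F (-n)) := by
  simp only [fourierCoeff, ← integral_conj, smul_eq_mul, map_mul, neg_neg, fourier_neg]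

theorem hasSum_fourierCoeff_neg_mul_fourierCoeff {F G : AddCircle T → ℂ}
    (hF : MemLp F 2 haarAddCircle) (hG : MemLp G 2 haarAddCircle) :
    HasSum (fun n => fourierCoeff F (-n) * fourierCoeff G n)
      (∫ t, F t * G t ∂haarAddCircle) := by
  have hF' : MemLp (fun t => conj (F t)) 2 haarAddCircle := hF.star
  have hinner : inner ℂ hF'.toLp hG.toLp = ∫ t, F t * G t ∂haarAddCircle := by
    rw [L2.inner_def]
    refine integral_congr_ae ?_
    filter_upwards [hF'.coeFn_toLp, hG.coeFn_toLp] with t hFt hGt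
    rw [RCLike.inner_apply, hFt, hGt, Complex.conj_conj, mul_comm]
  rw [← hinner]
  refine (fourierBasis.hasSum_inner_mul_inner hF'.toLp hG.toLp).congr_fun fun n => ?_
  rw [← inner_conj_symm, ← fourierBasis.repr_apply_apply, ← fourierBasis.repr_apply_apply,
    fourierBasis_repr, fourierBasis_repr, fourierCoeff_congr_ae hF'.coeFn_toLp,
    fourierCoeff_congr_ae hG.coeFn_toLp, fourierCoeff_conj, Complex.conj_conj]

variable {E : Type*} [NormedAddCommGroup E] [NormedSpace ℂ E]

theorem fourierCoeff_comp_add_right (F : AddCircle T → E) (s : AddCircle T) (n : ℤ) :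
    fourierCoeff (fun t => F (t + s)) n = fourier n s • fourierCoeff F n := by
  have h := integral_add_right_eq_self (μ := haarAddCircle)
    (fun t => fourier (-n) (t - s) • F t) s
  simp only [add_sub_cancel_right] at h
  rw [fourierCoeff, h, fourierCoeff, ← integral_smul]
  congr 1 with t
  rw [smul_smul, fourier_sub_apply, neg_neg]

theorem fourierCoeff_intervalIntegral_comp_add [CompleteSpace E] {F : AddCircle T → E}
    (hF : Continuous F) (a b : ℝ) (n : ℤ) :
    fourierCoeff (fun t => ∫ s in a..b, F (t + (s : AddCircle T))) n
      = (∫ s in a..b, fourier n (s : AddCircle T)) • fourierCoeff F n := by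
  have hint : Integrable (Function.uncurry fun (s : ℝ) (t : AddCircle T) =>
      fourier (-n) t • F (t + s)) ((volume.restrict (Set.uIoc a b)).prod haarAddCircle) := by
    have hcont : Continuous (Function.uncurry fun (s : ℝ) (t : AddCircle T) =>
        fourier (-n) t • F (t + s)) := by
      fun_prop
    have : IsFiniteMeasure (volume.restrict (Set.uIoc a b)) :=
      isFiniteMeasure_restrict.2 measure_Ioc_lt_top.ne
    refine Integrable.of_bound hcont.aestronglyMeasurable ‖(⟨F, hF⟩ : C(AddCircle T, E))‖
      (ae_of_all _ fun ⟨s, t⟩ => ?_)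
    simpa [norm_smul, Circle.norm_coe] using
      ContinuousMap.norm_coe_le_norm ⟨F, hF⟩ (t + (s : AddCircle T))
  calc fourierCoeff (fun t => ∫ s in a..b, F (t + (s : AddCircle T))) n
      = ∫ s in a..b, ∫ t, fourier (-n) t • F (t + (s : AddCircle T)) ∂haarAddCircle := by
        simp only [fourierCoeff, ← intervalIntegral.integral_smul]
        exact (intervalIntegral_integral_swap hint).symm
    _ = ∫ s in a..b, fourier n (s : AddCircle T) • fourierCoeff F n := by
        simp only [← fourierCoeff_comp_add_right]
        rfl
    _ = _ := intervalIntegral.integral_smul_const _ _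

end FourierCoeff

open Real

theorem neg_one_zpow_sq {R : Type*} [Field R] (n : ℤ) : ((-1 : R) ^ n) ^ 2 = 1 := by
  rw [sq, ← mul_zpow]
  simp

theorem rsinc_eq_sinc : rsinc = sinc := rfl

theorem integral_exp_mul_I_eq_two_mul_sinc (c β : ℝ) :
    ∫ u in -β..β, Complex.exp (c * u * Complex.I) = 2 * β * sinc (c * β) := by
  rcases eq_or_ne c 0 with rfl | hc
  · simp only [Complex.ofReal_zero, zero_mul, Complex.exp_zero, intervalIntegral.integral_const,
      sub_neg_eq_add, Complex.real_smul, Complex.ofReal_add, mul_one, sinc_zero,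
      Complex.ofReal_one]
    ring
  rcases eq_or_ne β 0 with rfl | hβ
  · simp
  have hcI : (c * Complex.I) ≠ 0 := mul_ne_zero (by exact_mod_cast hc) Complex.I_ne_zero
  simp_rw [mul_right_comm _ _ Complex.I]
  rw [integral_exp_mul_complex hcI, sinc_of_ne_zero (mul_ne_zero hc hβ)]
  push_cast
  have hc' : (c : ℂ) ≠ 0 := by exact_mod_cast hc
  have hβ' : (β : ℂ) ≠ 0 := by exact_mod_cast hβ
  rw [Complex.sin]
  field_simp
  ring_nf
  rw [Complex.I_sq]
  ring

instance fact_two_pi_pos : Fact (0 < 2 * π) := ⟨two_pi_pos⟩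

theorem fourier_coe_two_pi (n : ℤ) (t : ℝ) :
    fourier n (t : AddCircle (2 * π)) = Complex.exp (n * t * Complex.I) := by
  rw [fourier_coe_apply]
  congr 1
  field_simp
  push_cast
  ring

theorem integral_fourier_over_aperture (n : ℤ) (α : ℝ) :
    ∫ s in α..2 * π - α, fourier n (s : AddCircle (2 * π))
      = (-1) ^ n * (2 * (π - α) * sinc (n * (π - α)) : ℝ) := by
  have hshift := intervalIntegral.integral_comp_add_right
    (fun s : ℝ => fourier n (s : AddCircle (2 * π))) π (a := -(π - α)) (b := π - α)
  rw [show -(π - α) + π = α by ring, show π - α + π = 2 * π - α by ring] at hshift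
  have hpt (u : ℝ) : fourier n ((u + π : ℝ) : AddCircle (2 * π))
      = (-1) ^ n * Complex.exp ((n : ℝ) * u * Complex.I) := by
    rw [fourier_coe_two_pi, ← Complex.exp_pi_mul_I, ← Complex.exp_int_mul, ← Complex.exp_add]
    congr 1
    push_cast
    ring
  rw [← hshift]
  simp only [hpt, intervalIntegral.integral_const_mul]
  rw [integral_exp_mul_I_eq_two_mul_sinc]
  push_cast
  ring

noncomputable def expMulSin (x : ℝ) : AddCircle (2 * π) → ℂ :=
  (sin_periodic.comp fun s : ℝ => Complex.exp (Complex.I * x * s)).lift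

theorem expMulSin_coe (x t : ℝ) : expMulSin x t = Complex.exp (Complex.I * x * sin t) := rfl

theorem continuous_expMulSin (x : ℝ) : Continuous (expMulSin x) :=
  (QuotientAddGroup.isQuotientMap_mk _).continuous_iff.2
    (show Continuous fun t : ℝ => Complex.exp (Complex.I * x * sin t) by fun_prop)

theorem fourier_neg_smul_expMulSin_coe (n : ℤ) (x θ : ℝ) :
    fourier (-n) (θ : AddCircle (2 * π)) • expMulSin x θ
      = Complex.exp (Complex.I * (x * sin θ - n * θ)) := by
  rw [fourier_coe_two_pi, expMulSin_coe, smul_eq_mul, ← Complex.exp_add]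
  congr 1
  push_cast
  ring

theorem fourierCoeff_expMulSin (n : ℤ) (x : ℝ) : fourierCoeff (expMulSin x) n = besselJ n x := by
  rw [fourierCoeff_eq_intervalIntegral _ n 0, zero_add, besselJ, Complex.real_smul]
  simp_rw [fourier_neg_smul_expMulSin_coe]
  push_cast
  rfl

theorem besselJ_neg (n : ℤ) (x : ℝ) : besselJ (-n) x = (-1) ^ n * besselJ n x := by
  simp only [← fourierCoeff_expMulSin]
  rw [fourierCoeff_eq_intervalIntegral _ _ 0, fourierCoeff_eq_intervalIntegral _ _ (-π)]
  simp only [fourier_neg_smul_expMulSin_coe]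
  have hreflect (θ : ℝ) : Complex.exp (Complex.I * (x * sin θ - ((-n : ℤ) : ℂ) * θ))
      = (-1) ^ n * Complex.exp (Complex.I * (x * sin (π - θ) - n * (π - θ : ℝ))) := by
    rw [sin_pi_sub, ← Complex.exp_pi_mul_I, ← Complex.exp_int_mul, ← Complex.exp_add]
    congr 1
    push_cast
    ring
  simp only [hreflect, intervalIntegral.integral_const_mul]
  rw [intervalIntegral.integral_comp_sub_left
    (fun θ => Complex.exp (Complex.I * (x * sin θ - n * θ)))]
  rw [show π - (0 + 2 * π) = -π by ring, show π - 0 = -π + 2 * π by ring, Complex.real_smul,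
    Complex.real_smul]
  ring

noncomputable def expMulCosSub (x φ : ℝ) : AddCircle (2 * π) → ℂ :=
  fun z => expMulSin x (z + ((π / 2 - φ : ℝ) : AddCircle (2 * π)))

theorem expMulCosSub_coe (x φ t : ℝ) :
    expMulCosSub x φ t = Complex.exp (Complex.I * x * cos (t - φ)) := by
  rw [expMulCosSub, ← coe_add, expMulSin_coe, show t + (π / 2 - φ) = t - φ + π / 2 by ring,
    sin_add_pi_div_two]

@[fun_prop]
theorem continuous_expMulCosSub (x φ : ℝ) : Continuous (expMulCosSub x φ) :=
  (continuous_expMulSin x).comp (continuous_add_const _)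

theorem fourierCoeff_expMulCosSub (n : ℤ) (x φ : ℝ) :
    fourierCoeff (expMulCosSub x φ) n
      = fourier n ((π / 2 - φ : ℝ) : AddCircle (2 * π)) * besselJ n x := by
  unfold expMulCosSub
  rw [fourierCoeff_comp_add_right, fourierCoeff_expMulSin, smul_eq_mul]

theorem fourierCoeff_neg_mul_fourierCoeff_expMulCosSub (n : ℤ) (x φ : ℝ) :
    fourierCoeff (expMulCosSub x φ) (-n) * fourierCoeff (expMulCosSub x φ) n
      = (-1) ^ n * besselJ n x ^ 2 := by
  have hunit : fourier (-n) ((π / 2 - φ : ℝ) : AddCircle (2 * π))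
      * fourier n ((π / 2 - φ : ℝ) : AddCircle (2 * π)) = 1 := by
    rw [← fourier_add, neg_add_cancel, fourier_zero]
  rw [fourierCoeff_expMulCosSub, fourierCoeff_expMulCosSub, besselJ_neg]
  linear_combination ((-1) ^ n * besselJ n x ^ 2) * hunit

noncomputable def apertureAverage (x φ α : ℝ) : AddCircle (2 * π) → ℂ :=
  fun z => 1 / (2 * ((π : ℂ) - α)) * ∫ s in α..2 * π - α, expMulCosSub x φ (z + s)

theorem apertureAverage_coe (x φ α ϑ : ℝ) :
    apertureAverage x φ α ϑ = 1 / (2 * ((π : ℂ) - α)) *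
      ∫ θ in (ϑ + α)..(ϑ + 2 * π - α), Complex.exp (Complex.I * x * cos (θ - φ)) := by
  simp only [apertureAverage, ← coe_add, expMulCosSub_coe]
  rw [intervalIntegral.integral_comp_add_left (fun θ => Complex.exp (Complex.I * x * cos (θ - φ))),
    add_sub_assoc]

theorem continuous_apertureAverage (x φ α : ℝ) : Continuous (apertureAverage x φ α) :=
  continuous_const.mul (intervalIntegral.continuous_parametric_intervalIntegral_of_continuous'
    (by fun_prop) _ _)

theorem fourierCoeff_neg_expMulCosSub_mul_fourierCoeff_apertureAverage (n : ℤ) (x φ : ℝ)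
    {α : ℝ} (hα : α ≠ π) :
    fourierCoeff (expMulCosSub x φ) (-n) * fourierCoeff (apertureAverage x φ α) n
      = besselJ n x ^ 2 * sinc (n * (π - α)) := by
  have hβ : (π : ℂ) - α ≠ 0 := sub_ne_zero.2 (by exact_mod_cast hα.symm)
  unfold apertureAverage
  rw [fourierCoeff.const_mul,
    fourierCoeff_intervalIntegral_comp_add (continuous_expMulCosSub x φ),
    integral_fourier_over_aperture, smul_eq_mul]
  rw [show ∀ a b c d : ℂ, a * (b * (c * d)) = b * c * (a * d) from fun _ _ _ _ => by ring,
    fourierCoeff_neg_mul_fourierCoeff_expMulCosSub]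
  push_cast
  field_simp
  linear_combination (besselJ n x ^ 2 * sinc (n * (π - α))) * neg_one_zpow_sq (R := ℂ) n

theorem integral_expMulCosSub_mul_apertureAverage (x φ α : ℝ) :
    ∫ z, expMulCosSub x φ z * apertureAverage x φ α z ∂haarAddCircle
      = (1 / (2 * (Real.pi : ℂ))) *
        ∫ ϑ in (0:ℝ)..(2 * Real.pi),
          Complex.exp (Complex.I * (x : ℂ) * (Real.cos (ϑ - φ) : ℂ)) *
            ((1 / (2 * ((Real.pi : ℂ) - (α : ℂ)))) *
              ∫ θ in (ϑ + α)..(ϑ + 2 * Real.pi - α),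
                Complex.exp (Complex.I * (x : ℂ) * (Real.cos (θ - φ) : ℂ))) := by
  rw [integral_haarAddCircle, ← AddCircle.intervalIntegral_preimage (2 * π) 0, zero_add,
    Complex.real_smul]
  simp only [expMulCosSub_coe, apertureAverage_coe]
  push_cast
  ring

theorem lambda_term_continuous_aperture_general (x φ α : ℝ) (hαπ : α < Real.pi) :
    Summable (fun p : ℕ =>
      ‖besselJ (p + 1) x ^ 2 * (rsinc (((p : ℝ) + 1) * (Real.pi - α)) : ℂ)‖) ∧
    (1 / (2 * (Real.pi : ℂ))) *
        ∫ ϑ in (0:ℝ)..(2 * Real.pi),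
          Complex.exp (Complex.I * (x : ℂ) * (Real.cos (ϑ - φ) : ℂ)) *
            ((1 / (2 * ((Real.pi : ℂ) - (α : ℂ)))) *
              ∫ θ in (ϑ + α)..(ϑ + 2 * Real.pi - α),
                Complex.exp (Complex.I * (x : ℂ) * (Real.cos (θ - φ) : ℂ)))
      = besselJ 0 x ^ 2 +
        2 * ∑' p : ℕ,
          besselJ (p + 1) x ^ 2 * (rsinc (((p : ℝ) + 1) * (Real.pi - α)) : ℂ) := by
  set a : ℤ → ℂ := fun n => besselJ n x ^ 2 * sinc (n * (π - α)) with ha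
  have hsum : HasSum a (∫ z, expMulCosSub x φ z * apertureAverage x φ α z ∂haarAddCircle) :=
    (hasSum_fourierCoeff_neg_mul_fourierCoeff
      (ContinuousMap.memLp _ ℂ ⟨_, continuous_expMulCosSub x φ⟩)
      (ContinuousMap.memLp _ ℂ ⟨_, continuous_apertureAverage x φ α⟩)).congr_fun
      fun n => (fourierCoeff_neg_expMulCosSub_mul_fourierCoeff_apertureAverage n x φ hαπ.ne).symm
  have heven : a.Even := fun n => by
    simp only [ha, besselJ_neg, Int.cast_neg, neg_mul, sinc_neg, mul_pow, neg_one_zpow_sq, one_mul]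
  have hterm (p : ℕ) :
      besselJ (p + 1) x ^ 2 * (rsinc (((p : ℝ) + 1) * (π - α)) : ℂ) = a (p + 1) := by
    simp [ha, rsinc_eq_sinc]
  simp only [hterm]
  refine ⟨summable_norm_iff.2 (hsum.summable.comp_injective fun p q h => by simpa using h), ?_⟩
  rw [← integral_expMulCosSub_mul_apertureAverage, ← hsum.tsum_eq,
    tsum_int_eq_zero_add_two_mul_tsum_pnat heven hsum.summable,
    tsum_pnat_eq_tsum_succ (f := fun k : ℕ => a k)]
  simp [ha, nsmul_eq_mul]

/-- Continuous-aperture form of the Λ-term: for real `x`, `φ` and `0 < α < π`,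
`(1/(2π)) ∫_0^{2π} exp(i x cos(ϑ − φ)) [(1/(2(π − α))) ∫_{ϑ+α}^{ϑ+2π−α} exp(i x cos(θ − φ)) dθ] dϑ
  = J_0(x)² + 2 ∑_{p=1}^∞ J_p(x)² sinc(p(π − α))`, the series converging absolutely. -/
theorem lambda_term_continuous_aperture (x φ α : ℝ) (hα0 : 0 < α) (hαπ : α < Real.pi) :
    Summable (fun p : ℕ =>
      ‖besselJ (p + 1) x ^ 2 * (rsinc (((p : ℝ) + 1) * (Real.pi - α)) : ℂ)‖) ∧
    (1 / (2 * (Real.pi : ℂ))) *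
        ∫ ϑ in (0:ℝ)..(2 * Real.pi),
          Complex.exp (Complex.I * (x : ℂ) * (Real.cos (ϑ - φ) : ℂ)) *
            ((1 / (2 * ((Real.pi : ℂ) - (α : ℂ)))) *
              ∫ θ in (ϑ + α)..(ϑ + 2 * Real.pi - α),
                Complex.exp (Complex.I * (x : ℂ) * (Real.cos (θ - φ) : ℂ)))
      = besselJ 0 x ^ 2 +
        2 * ∑' p : ℕ,
          besselJ (p + 1) x ^ 2 * (rsinc (((p : ℝ) + 1) * (Real.pi - α)) : ℂ) :=
  lambda_term_continuous_aperture_general x φ α hαπ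
end

section
/- (Continuous-aperture form of the Γ-term in Theorem 4.1.) Let x, ψ be real numbers and let 0 < α ≤ π. Then (1/(2π)) ∫_0^{2π} exp(i x cos(ϑ − ψ)) · [ (1/(2α)) ∫_{ϑ−α}^{ϑ+α} exp(i x cos(θ − ψ)) dθ ] dϑ = J_0(x)² + 2 ∑_{q=1}^∞ (−1)^q J_q(x)² sinc(qα), where the series converges absolutely. -/
open MeasureTheory Filter

/-
The inner average is the convolution of the plane wave `θ ↦ exp (i x cos (θ - ψ))` on
`ℝ / 2πℤ` with the normalised indicator of `[-α, α]`, so it multiplies the `n`-th Fourier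
coefficient by `sinc (n α)`. Translating `ψ` to `π/2`, where `cos (θ - π/2) = sin θ`, shows
that the plane wave has coefficients `c n = exp (i n (π/2 - ψ)) J_n(x)`, and reflecting
`θ ↦ -θ` turns `ψ` into `-ψ`, whence `c (-n) * c n = (-1)^n J_n(x)²`. Parseval's identity
for the pairing of two `L²` functions writes the outer average as the absolutely convergent
sum `∑_{n ∈ ℤ} (-1)^n J_n(x)² sinc (n α)`, whose terms are even in `n`.
-/

open Complex
open scoped Real ComplexConjugate InnerProductSpace

lemma integral_exp_mul_I_eq_rsinc (c α : ℝ) :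
    ∫ s in (-α)..α, exp (c * s * I) = ((2 * α * rsinc (c * α) : ℝ) : ℂ) := by
  rcases eq_or_ne c 0 with rfl | hc
  · simp [rsinc]
    ring
  rcases eq_or_ne α 0 with rfl | hα
  · simp
  have hcI : (c : ℂ) * I ≠ 0 := mul_ne_zero (ofReal_ne_zero.mpr hc) I_ne_zero
  have hexp : ∀ s : ℝ, exp (c * s * I) = exp ((c * I) * s) := fun s => by ring_nf
  simp only [hexp, integral_exp_mul_complex hcI, rsinc, mul_ne_zero hc hα, if_false]
  rw [show (c : ℂ) * I * α = ((c * α : ℝ) : ℂ) * I by push_cast; ring,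
    show (c : ℂ) * I * ((-α : ℝ) : ℂ) = -((c * α : ℝ) : ℂ) * I by push_cast; ring,
    exp_mul_I, exp_mul_I, cos_neg, sin_neg, ← ofReal_sin]
  have : (α : ℂ) ≠ 0 := ofReal_ne_zero.mpr hα
  push_cast
  field_simp
  ring

lemma rsinc_neg (t : ℝ) : rsinc (-t) = rsinc t := by
  simp only [rsinc, neg_eq_zero, Real.sin_neg, neg_div_neg_eq]

namespace AddCircle

variable {T : ℝ}

lemma fourier_apply_add (n : ℤ) (z w : AddCircle T) :
    fourier n (z + w) = fourier n z * fourier n w := by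
  simp only [fourier_apply, smul_add, toCircle_add, Circle.coe_mul]

noncomputable def arcAverage (F : AddCircle T → ℂ) (α : ℝ) (z : AddCircle T) : ℂ :=
  1 / (2 * (α : ℂ)) * ∫ s in Set.Ioc (-α) α, F (z + (s : AddCircle T))

lemma arcAverage_coe (F : AddCircle T → ℂ) {α : ℝ} (hα : 0 ≤ α) (t : ℝ) :
    arcAverage F α t = 1 / (2 * (α : ℂ)) * ∫ θ in (t - α)..(t + α), F θ := by
  rw [arcAverage, ← intervalIntegral.integral_of_le (by linarith), sub_eq_add_neg,
    ← intervalIntegral.integral_comp_add_left]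
  simp only [coe_add]

variable [Fact (0 < T)]

lemma fourierCoeff_comp_add {E : Type*} [NormedAddCommGroup E] [NormedSpace ℂ E]
    (F : AddCircle T → E) (w : AddCircle T) (n : ℤ) :
    fourierCoeff (fun z => F (z + w)) n = fourier n w • fourierCoeff F n := by
  have h := integral_add_right_eq_self (μ := haarAddCircle)
    (fun z => fourier (-n) (z - w) • F z) w
  simp only [add_sub_cancel_right] at h
  have hw : fourier (-n) (-w) = fourier n w := by simp only [fourier_apply, neg_smul_neg]
  simp only [fourierCoeff, h, ← integral_smul, sub_eq_add_neg, fourier_apply_add, hw, smul_smul,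
    mul_comm]

lemma fourierCoeff_comp_neg {E : Type*} [NormedAddCommGroup E] [NormedSpace ℂ E]
    (f : AddCircle T → E) (n : ℤ) :
    fourierCoeff (fun z => f (-z)) n = fourierCoeff f (-n) := by
  simp only [fourierCoeff]
  rw [← integral_neg_eq_self]
  simp only [neg_neg, fourier_apply, smul_neg, neg_smul]

lemma continuous_integral_comp_add {F : AddCircle T → ℂ} (hF : Continuous F)
    (ν : Measure ℝ) [IsFiniteMeasure ν] :
    Continuous fun z : AddCircle T => ∫ s, F (z + (s : AddCircle T)) ∂ν := by
  obtain ⟨C, hC⟩ := (isCompact_univ.image hF).isBounded.exists_norm_le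
  refine continuous_of_dominated (bound := fun _ => C) (fun z => ?_) (fun z => ?_)
    (integrable_const C) (Eventually.of_forall fun s => ?_)
  · exact (hF.comp (continuous_const.add continuous_quotient_mk')).aestronglyMeasurable
  · exact Eventually.of_forall fun s => hC _ ⟨_, trivial, rfl⟩
  · fun_prop

lemma fourierCoeff_integral_comp_add {F : AddCircle T → ℂ} (hF : Continuous F)
    (ν : Measure ℝ) [IsFiniteMeasure ν] (n : ℤ) :
    fourierCoeff (fun z => ∫ s, F (z + (s : AddCircle T)) ∂ν) n
      = (∫ s, fourier n (s : AddCircle T) ∂ν) * fourierCoeff F n := by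
  obtain ⟨C, hC⟩ := (isCompact_univ.image hF).isBounded.exists_norm_le
  have hint : Integrable
      (fun p : AddCircle T × ℝ => fourier (-n) p.1 * F (p.1 + (p.2 : AddCircle T)))
      (haarAddCircle.prod ν) := by
    refine (integrable_const C).mono' (by fun_prop) (Eventually.of_forall fun p => ?_)
    rw [norm_mul, fourier_apply, Circle.norm_coe, one_mul]
    exact hC _ ⟨_, trivial, rfl⟩
  calc fourierCoeff (fun z => ∫ s, F (z + (s : AddCircle T)) ∂ν) n
      = ∫ z, ∫ s, fourier (-n) z * F (z + (s : AddCircle T)) ∂ν ∂haarAddCircle := by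
        simp only [fourierCoeff, smul_eq_mul, integral_const_mul]
    _ = ∫ s, fourierCoeff (fun z => F (z + (s : AddCircle T))) n ∂ν := by
        simp only [fourierCoeff, smul_eq_mul]
        exact integral_integral_swap hint
    _ = (∫ s, fourier n (s : AddCircle T) ∂ν) * fourierCoeff F n := by
        simp only [fourierCoeff_comp_add, smul_eq_mul, integral_mul_const]

lemma fourierCoeff_star (f : AddCircle T → ℂ) (n : ℤ) :
    fourierCoeff (star f) n = conj (fourierCoeff f (-n)) := by
  simp only [fourierCoeff, smul_eq_mul, ← integral_conj, map_mul, neg_neg, fourier_neg,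
    Pi.star_apply, RCLike.star_def]

lemma hasSum_fourierCoeff_neg_mul_fourierCoeff {f g : AddCircle T → ℂ}
    (hf : MemLp f 2 haarAddCircle) (hg : MemLp g 2 haarAddCircle) :
    HasSum (fun n => fourierCoeff f (-n) * fourierCoeff g n)
      (∫ z, f z * g z ∂haarAddCircle) := by
  have hcoeff {h : AddCircle T → ℂ} (hh : MemLp h 2 haarAddCircle) (n : ℤ) :
      ⟪fourierBasis n, hh.toLp h⟫_ℂ = fourierCoeff h n := by
    rw [← HilbertBasis.repr_apply_apply, fourierBasis_repr]
    exact congrFun (fourierCoeff_congr_ae hh.coeFn_toLp) n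
  have hinner : ⟪hf.star.toLp (star f), hg.toLp g⟫_ℂ = ∫ z, f z * g z ∂haarAddCircle := by
    rw [L2.inner_def]
    refine integral_congr_ae ?_
    filter_upwards [hf.star.coeFn_toLp, hg.coeFn_toLp] with z hfz hgz
    simp [hfz, hgz, mul_comm]
  have h := fourierBasis.hasSum_inner_mul_inner (hf.star.toLp (star f)) (hg.toLp g)
  simp only [hinner, ← inner_conj_symm (hf.star.toLp (star f)), hcoeff, fourierCoeff_star,
    Complex.conj_conj] at h
  exact h

lemma integral_mul_arcAverage_eq_intervalIntegral {F : AddCircle T → ℂ} {α : ℝ}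
    (hα : 0 ≤ α) :
    ∫ z, F z * arcAverage F α z ∂haarAddCircle
      = 1 / (T : ℂ) * ∫ ϑ in (0 : ℝ)..T,
          F ϑ * (1 / (2 * (α : ℂ)) * ∫ θ in (ϑ - α)..(ϑ + α), F θ) := by
  rw [integral_haarAddCircle, ← AddCircle.intervalIntegral_preimage T 0, zero_add,
    Complex.real_smul]
  simp only [arcAverage_coe F hα]
  push_cast
  ring

lemma continuous_arcAverage {F : AddCircle T → ℂ} (hF : Continuous F) (α : ℝ) :
    Continuous (arcAverage F α) :=
  continuous_const.mul (continuous_integral_comp_add hF _)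

lemma fourierCoeff_arcAverage {F : AddCircle T → ℂ} (hF : Continuous F) {α : ℝ}
    (hα : 0 < α) (n : ℤ) :
    fourierCoeff (arcAverage F α) n = rsinc (2 * π * n / T * α) * fourierCoeff F n := by
  have hsinc : ∫ s in Set.Ioc (-α) α, fourier n (s : AddCircle T)
      = ((2 * α * rsinc (2 * π * n / T * α) : ℝ) : ℂ) := by
    rw [← intervalIntegral.integral_of_le (by linarith), ← integral_exp_mul_I_eq_rsinc]
    congr 1 with s
    rw [fourier_coe_apply]
    push_cast
    ring_nf
  unfold arcAverage
  rw [fourierCoeff.const_mul, fourierCoeff_integral_comp_add hF, hsinc]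
  have : (α : ℂ) ≠ 0 := ofReal_ne_zero.mpr hα.ne'
  push_cast
  field_simp

end AddCircle

instance : Fact (0 < 2 * π) := ⟨Real.two_pi_pos⟩

lemma periodic_exp_I_mul_cos_sub (x ψ : ℝ) :
    Function.Periodic (fun θ : ℝ => exp (I * x * Real.cos (θ - ψ))) (2 * π) := fun θ => by
  simp only [add_sub_right_comm θ, Real.cos_add_two_pi]

noncomputable def planeWave (x ψ : ℝ) : AddCircle (2 * π) → ℂ :=
  (periodic_exp_I_mul_cos_sub x ψ).lift

lemma planeWave_coe (x ψ θ : ℝ) : planeWave x ψ θ = exp (I * x * Real.cos (θ - ψ)) := rfl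

lemma continuous_planeWave (x ψ : ℝ) : Continuous (planeWave x ψ) :=
  continuous_coinduced_dom.mpr
    (show Continuous fun θ : ℝ => exp (I * x * Real.cos (θ - ψ)) by fun_prop)

lemma planeWave_neg (x ψ : ℝ) (z : AddCircle (2 * π)) :
    planeWave x ψ (-z) = planeWave x (-ψ) z := by
  induction z using QuotientAddGroup.induction_on with | H θ => ?_
  rw [← AddCircle.coe_neg, planeWave_coe, planeWave_coe, ← Real.cos_neg]
  ring_nf

lemma planeWave_eq_comp_add (x ψ : ℝ) (z : AddCircle (2 * π)) :
    planeWave x ψ z = planeWave x (π / 2) (z + ((π / 2 - ψ : ℝ) : AddCircle (2 * π))) := by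
  induction z using QuotientAddGroup.induction_on with | H θ => ?_
  rw [← AddCircle.coe_add, planeWave_coe, planeWave_coe]
  ring_nf

lemma fourierCoeff_planeWave_pi_div_two (x : ℝ) (n : ℤ) :
    fourierCoeff (planeWave x (π / 2)) n = besselJ n x := by
  rw [fourierCoeff_eq_intervalIntegral _ n 0, zero_add, besselJ, Complex.real_smul]
  push_cast
  congr 1
  refine intervalIntegral.integral_congr fun θ _ => ?_
  rw [smul_eq_mul, planeWave_coe, Real.cos_sub_pi_div_two, fourier_coe_apply, ← Complex.exp_add]
  congr 1
  field_simp
  push_cast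
  ring

lemma fourierCoeff_planeWave (x ψ : ℝ) (n : ℤ) :
    fourierCoeff (planeWave x ψ) n
      = fourier n ((π / 2 - ψ : ℝ) : AddCircle (2 * π)) * besselJ n x := by
  rw [funext (planeWave_eq_comp_add x ψ), AddCircle.fourierCoeff_comp_add,
    fourierCoeff_planeWave_pi_div_two, smul_eq_mul]

lemma fourierCoeff_planeWave_neg_mul (x ψ : ℝ) (n : ℤ) :
    fourierCoeff (planeWave x ψ) (-n) * fourierCoeff (planeWave x ψ) n
      = (-1) ^ n * besselJ n x ^ 2 := by
  rw [← AddCircle.fourierCoeff_comp_neg, funext (planeWave_neg x ψ), fourierCoeff_planeWave,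
    fourierCoeff_planeWave]
  have hπ : fourier n ((π : ℝ) : AddCircle (2 * π)) = (-1) ^ n := by
    rw [fourier_coe_apply, ← exp_pi_mul_I, ← exp_int_mul]
    congr 1
    push_cast
    field_simp
  rw [mul_mul_mul_comm, ← AddCircle.fourier_apply_add, ← AddCircle.coe_add,
    show π / 2 - -ψ + (π / 2 - ψ) = π by ring, hπ]
  ring

lemma neg_one_zpow_mul_besselJ_sq_even (x : ℝ) :
    Function.Even fun n : ℤ => (-1 : ℂ) ^ n * besselJ n x ^ 2 := fun n => by
  dsimp only
  rw [← fourierCoeff_planeWave_neg_mul x 0, ← fourierCoeff_planeWave_neg_mul x 0, neg_neg,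
    mul_comm]

lemma hasSum_planeWave_mul_arcAverage (x ψ : ℝ) {α : ℝ} (hα : 0 < α) :
    HasSum (fun n : ℤ => (-1 : ℂ) ^ n * besselJ n x ^ 2 * (rsinc (n * α) : ℂ))
      (∫ z, planeWave x ψ z * AddCircle.arcAverage (planeWave x ψ) α z
        ∂AddCircle.haarAddCircle) := by
  have hP := continuous_planeWave x ψ
  convert AddCircle.hasSum_fourierCoeff_neg_mul_fourierCoeff
    (hP.memLp_of_hasCompactSupport (.of_compactSpace _))
    ((AddCircle.continuous_arcAverage hP α).memLp_of_hasCompactSupport (.of_compactSpace _))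
    using 2 with n
  rw [AddCircle.fourierCoeff_arcAverage hP hα, mul_div_cancel_left₀ _ Real.two_pi_pos.ne',
    mul_left_comm, fourierCoeff_planeWave_neg_mul]
  ring

theorem gamma_term_continuous_aperture_general (x ψ α : ℝ) (hα0 : 0 < α) :
    Summable (fun q : ℕ =>
      ‖(-1 : ℂ) ^ (q + 1) * besselJ (q + 1) x ^ 2 * (rsinc (((q : ℝ) + 1) * α) : ℂ)‖) ∧
    (1 / (2 * (Real.pi : ℂ))) *
        ∫ ϑ in (0:ℝ)..(2 * Real.pi),
          Complex.exp (Complex.I * (x : ℂ) * (Real.cos (ϑ - ψ) : ℂ)) *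
            ((1 / (2 * (α : ℂ))) *
              ∫ θ in (ϑ - α)..(ϑ + α),
                Complex.exp (Complex.I * (x : ℂ) * (Real.cos (θ - ψ) : ℂ)))
      = besselJ 0 x ^ 2 +
        2 * ∑' q : ℕ,
          (-1 : ℂ) ^ (q + 1) * besselJ (q + 1) x ^ 2 * (rsinc (((q : ℝ) + 1) * α) : ℂ) := by
  set A : ℤ → ℂ := fun n => (-1 : ℂ) ^ n * besselJ n x ^ 2 * (rsinc (n * α) : ℂ)
  have hA := hasSum_planeWave_mul_arcAverage x ψ hα0
  have heven : A.Even := fun n => by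
    simp only [A, neg_one_zpow_mul_besselJ_sq_even x n, Int.cast_neg, neg_mul, rsinc_neg]
  have hterm (q : ℕ) : A (q + 1)
      = (-1 : ℂ) ^ (q + 1) * besselJ (q + 1) x ^ 2 * (rsinc (((q : ℝ) + 1) * α) : ℂ) := by
    simp only [A]
    push_cast
    rfl
  refine ⟨?_, ?_⟩
  · simpa only [Function.comp_def, ← hterm] using
      (summable_norm_iff.mpr hA.summable).comp_injective
        ((add_left_injective 1).comp Nat.cast_injective)
  · have hLHS :=
      AddCircle.integral_mul_arcAverage_eq_intervalIntegral (F := planeWave x ψ) hα0.le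
    simp only [planeWave_coe, ofReal_mul, ofReal_ofNat] at hLHS
    rw [← hLHS, ← hA.tsum_eq, tsum_int_eq_zero_add_two_mul_tsum_pnat heven hA.summable,
      tsum_pnat_eq_tsum_succ (f := fun n : ℕ => A n)]
    simp only [Nat.cast_add, Nat.cast_one, hterm, nsmul_eq_mul, Nat.cast_ofNat]
    simp [A, rsinc]

/-- Continuous-aperture form of the Γ-term: for real `x`, `ψ` and `0 < α ≤ π`,
`(1/(2π)) ∫_0^{2π} exp(i x cos(ϑ − ψ)) [(1/(2α)) ∫_{ϑ−α}^{ϑ+α} exp(i x cos(θ − ψ)) dθ] dϑ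
  = J_0(x)² + 2 ∑_{q=1}^∞ (−1)^q J_q(x)² sinc(qα)`, the series converging absolutely. -/
theorem gamma_term_continuous_aperture (x ψ α : ℝ) (hα0 : 0 < α) (hαπ : α ≤ Real.pi) :
    Summable (fun q : ℕ =>
      ‖(-1 : ℂ) ^ (q + 1) * besselJ (q + 1) x ^ 2 * (rsinc (((q : ℝ) + 1) * α) : ℂ)‖) ∧
    (1 / (2 * (Real.pi : ℂ))) *
        ∫ ϑ in (0:ℝ)..(2 * Real.pi),
          Complex.exp (Complex.I * (x : ℂ) * (Real.cos (ϑ - ψ) : ℂ)) *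
            ((1 / (2 * (α : ℂ))) *
              ∫ θ in (ϑ - α)..(ϑ + α),
                Complex.exp (Complex.I * (x : ℂ) * (Real.cos (θ - ψ) : ℂ)))
      = besselJ 0 x ^ 2 +
        2 * ∑' q : ℕ,
          (-1 : ℂ) ^ (q + 1) * besselJ (q + 1) x ^ 2 * (rsinc (((q : ℝ) + 1) * α) : ℂ) :=
  gamma_term_continuous_aperture_general x ψ α hα0
end
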